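/- arXiv:2507.13965 — 7 statements merged into one kernel-verified Lean document; each statement's English description precedes it below -/
import Mathlib

section
/- Let α₀, β_yx, α_v, α_z, α_u, γ₀, β_xy, γ_v, γ_w, γ_u, R_w, R_z be real numbers with β_xy*β_yx ≠ 1, and set ι = 1/(1 - β_xy*β_yx). Suppose real numbers X, Y, U, V, Z, W, ε_x, ε_y satisfy the extended structural equations X = α₀ + β_yx*Y + α_v*V + α_z*Z + γ_w*R_w*W + α_u*U + ε_x and Y = γ₀ + β_xy*X + γ_v*V + γ_w*W + α_z*R_z*Z + γ_u*U + ε_y. Then X = θ₀ + θ_z*Z + θ_w*W + θ_v*V + θ_u*U + ν_x and Y = μ₀ + μ_z*Z + μ_w*W + μ_v*V + μ_u*U + ν_y, where θ_z = α_z*(1 + R_z*β_yx)*ι, θ_w = γ_w*(R_w + β_yx)*ι, μ_z = α_z*(R_z + β_xy)*ι, μ_w = γ_w*(1 + R_w*β_xy)*ι, and all remaining coefficients θ₀, μ₀, θ_v, μ_v, θ_u, μ_u, ν_x, ν_y take the same form as in the reduced form of the model without sensitivity parameters: θ₀ = (α₀ + γ₀*β_yx)*ι, μ₀ = (γ₀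 + α₀*β_xy)*ι, θ_v = (α_v + γ_v*β_yx)*ι, μ_v = (γ_v + α_v*β_xy)*ι, θ_u = (α_u + γ_u*β_yx)*ι, μ_u = (γ_u + α_u*β_xy)*ι, ν_x = (ε_x + β_yx*ε_y)*ι, ν_y = (ε_y + β_xy*ε_x)*ι. -/
/-! Substituting each structural equation into the other leaves `(1 - β_xy β_yx) X` and
`(1 - β_xy β_yx) Y` equal to affine combinations of the exogenous terms, so the reduced form is the
solution of a 2 × 2 linear system whose determinant is nonzero by assumption. -/

theorem solve_bidirectional {K : Type*} [Field K] {a b c d x y : K} (h : d * b ≠ 1)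
    (hx : x = a + b * y) (hy : y = c + d * x) :
    x = (a + b * c) / (1 - d * b) ∧ y = (c + d * a) / (1 - d * b) := by
  have hdet : 1 - d * b ≠ 0 := sub_ne_zero.mpr h.symm
  constructor <;> rw [eq_div_iff hdet]
  · linear_combination hx + b * hy
  · linear_combination hy + d * hx

/-- Reduced form of the sensitivity-analysis extension of the bidirectional
proximal causal model, in which `W` directly affects `X` with coefficient
`γ_w R_w` and `Z` directly affects `Y` with coefficient `α_z R_z`. -/
theorem stmt_4 (α₀ βyx αv αz αu γ₀ βxy γv γw γu Rw Rz : ℝ)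
    (hne : βxy * βyx ≠ 1) (ι : ℝ) (hι : ι = 1 / (1 - βxy * βyx))
    (X Y U V Z W εx εy : ℝ)
    (hX : X = α₀ + βyx * Y + αv * V + αz * Z + γw * Rw * W + αu * U + εx)
    (hY : Y = γ₀ + βxy * X + γv * V + γw * W + αz * Rz * Z + γu * U + εy) :
    X = (α₀ + γ₀ * βyx) * ι + (αz * (1 + Rz * βyx) * ι) * Z
        + (γw * (Rw + βyx) * ι) * W + ((αv + γv * βyx) * ι) * V
        + ((αu + γu * βyx) * ι) * U + (εx + βyx * εy) * ι ∧
    Y = (γ₀ + α₀ * βxy) * ι + (αz * (Rz + βxy) * ι) * Z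
        + (γw * (1 + Rw * βxy) * ι) * W + ((γv + αv * βxy) * ι) * V
        + ((γu + αu * βxy) * ι) * U + (εy + βxy * εx) * ι := by
  obtain ⟨hX', hY'⟩ := solve_bidirectional hne
    (x := X) (y := Y) (a := α₀ + αv * V + αz * Z + γw * Rw * W + αu * U + εx)
    (c := γ₀ + γv * V + γw * W + αz * Rz * Z + γu * U + εy)
    (by linear_combination hX) (by linear_combination hY)
  subst hι
  constructor
  · rw [hX']; ring
  · rw [hY']; ring
end

section
/- Let β, β', R_w, R_z be real numbers with 1 + R_z*β' ≠ 0 and 1 + R_w*β ≠ 0, and define S = (R_z + β)/(1 + R_z*β') and T = (R_w + β')/(1 + R_w*β). If 1 - S*T*R_w*R_z ≠ 0, then β = (S*(1 + T*R_z - R_w*R_z) - R_z)/(1 - S*T*R_w*R_z). -/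
/-- Sensitivity adjustment formula recovering `β^s_{x→y}` from the identified
coefficient ratios `S = S_{x→y}`, `T = S_{y→x}` and the sensitivity parameters
`R_w, R_z`. -/
theorem stmt_7 (β β' Rw Rz : ℝ) (h1 : 1 + Rz * β' ≠ 0) (h2 : 1 + Rw * β ≠ 0)
    (S T : ℝ) (hS : S = (Rz + β) / (1 + Rz * β'))
    (hT : T = (Rw + β') / (1 + Rw * β))
    (hden : 1 - S * T * Rw * Rz ≠ 0) :
    β = (S * (1 + T * Rz - Rw * Rz) - Rz) / (1 - S * T * Rw * Rz) := by
  have hS_mul : S * (1 + Rz * β') = Rz + β := hS ▸ div_mul_cancel₀ _ h1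
  have hT_mul : T * (1 + Rw * β) = Rw + β' := hT ▸ div_mul_cancel₀ _ h2
  rw [eq_div_iff hden]
  -- The cleared equations are linear in `β, β'`; eliminate `β'` using the second.
  linear_combination -hS_mul - S * Rz * hT_mul
end

section
/- Let β, β', R_w, R_z be real numbers with 1 + R_z*β' ≠ 0 and 1 + R_w*β ≠ 0, and define S = (R_z + β)/(1 + R_z*β') and T = (R_w + β')/(1 + R_w*β). If 1 - S*T*R_w*R_z ≠ 0, then β' = (T*(1 + S*R_w - R_w*R_z) - R_w)/(1 - S*T*R_w*R_z). -/
/-- Sensitivity adjustment formula recovering `β^s_{y→x}` from the identified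
coefficient ratios `S = S_{x→y}`, `T = S_{y→x}` and the sensitivity parameters
`R_w, R_z`. -/
theorem stmt_8 (β β' Rw Rz : ℝ) (h1 : 1 + Rz * β' ≠ 0) (h2 : 1 + Rw * β ≠ 0)
    (S T : ℝ) (hS : S = (Rz + β) / (1 + Rz * β'))
    (hT : T = (Rw + β') / (1 + Rw * β))
    (hden : 1 - S * T * Rw * Rz ≠ 0) :
    β' = (T * (1 + S * Rw - Rw * Rz) - Rw) / (1 - S * T * Rw * Rz) := by
  have hS_mul : S * (1 + Rz * β') = Rz + β := (eq_div_iff h1).mp hS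
  have hT_mul : T * (1 + Rw * β) = Rw + β' := (eq_div_iff h2).mp hT
  rw [eq_div_iff hden]
  -- Substituting `β = S * (1 + Rz * β') - Rz` from `hS_mul` into `hT_mul` leaves a
  -- linear equation in `β'` with leading coefficient `1 - S * T * Rw * Rz`.
  linear_combination -hT_mul - T * Rw * hS_mul
end

section
/- Let (Ω, F, P) be a probability space and m ≤ F a sub-σ-algebra. Let Z, V, W, U, X, ε_w, ν_x be real-valued integrable random variables with Z and V strongly m-measurable, and suppose: W = η₀ + η_u*U + η_v*V + ε_w with η_u ≠ 0 and E[ε_w | m] = 0 almost surely; X = θ₀ + θ_z*Z + θ_w*W + θ_v*V + θ_u*U + ν_x with E[ν_x | m] = 0 almost surely; and U, W, Z*1 (i.e., Z), V are such that all products appearing are integrable. Then, almost surely, E[X | m] = (θ₀ - θ_u*η₀/η_u) + θ_z*Z + (θ_v - θ_u*η_v/η_u)*V + (θ_w + θ_u/η_u)*E[W | m]. -/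
open MeasureTheory

/-
Solving the proxy equation for `U` and substituting it into the equation for `X` gives the
pointwise identity
`X = (θ₀ - θu η₀ / ηu) + θz Z + (θv - θu ηv / ηu) V + (θw + θu / ηu) W + (νx - (θu / ηu) εw)`.
The first three terms are `m`-measurable and the last one has zero conditional expectation, so
taking `P[· | m]` leaves exactly the claimed affine combination of `1, Z, V` and `P[W | m]`.
-/

section

variable {Ω E : Type*} [NormedAddCommGroup E] [NormedSpace ℝ E] [CompleteSpace E]
  {m mΩ : MeasurableSpace Ω} {μ : Measure Ω}

theorem condExp_sub_smul_ae_eq_zero {f g : Ω → E} (hf : Integrable f μ) (hg : Integrable g μ)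
    (hf0 : μ[f|m] =ᵐ[μ] 0) (hg0 : μ[g|m] =ᵐ[μ] 0) (c : ℝ) :
    μ[f - c • g|m] =ᵐ[μ] 0 := by
  filter_upwards [condExp_sub hf (hg.smul c) m, condExp_smul (μ := μ) c g m, hf0, hg0]
    with ω hsub hsmul hf0ω hg0ω
  simp [hsub, hsmul, hf0ω, hg0ω]

theorem condExp_add_smul_add_ae_eq (hm : m ≤ mΩ) [SigmaFinite (μ.trim hm)] {A W ν : Ω → E}
    (hA : StronglyMeasurable[m] A) (hAint : Integrable A μ) (hW : Integrable W μ)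
    (hν : Integrable ν μ) (hν0 : μ[ν|m] =ᵐ[μ] 0) (c : ℝ) :
    μ[A + c • W + ν|m] =ᵐ[μ] A + c • μ[W|m] := by
  have hAW : μ[A + c • W|m] =ᵐ[μ] A + c • μ[W|m] := by
    filter_upwards [condExp_add hAint (hW.smul c) m, condExp_smul (μ := μ) c W m]
      with ω hadd hsmul
    simp [hadd, hsmul, condExp_of_stronglyMeasurable hm hA hAint]
  filter_upwards [condExp_add (hAint.add (hW.smul c)) hν m, hAW, hν0] with ω hadd hAWω hν0ω
  simp [hadd, hAWω, hν0ω]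

end

theorem stmt_14_general {Ω : Type*} {mΩ : MeasurableSpace Ω} (P : Measure Ω)
    [IsProbabilityMeasure P] (m : MeasurableSpace Ω) (hm : m ≤ mΩ)
    (Z V W U X εw νx : Ω → ℝ)
    (hZmeas : StronglyMeasurable[m] Z) (hVmeas : StronglyMeasurable[m] V)
    (hZint : Integrable Z P) (hVint : Integrable V P) (hWint : Integrable W P)
    (hεwint : Integrable εw P) (hνxint : Integrable νx P)
    (η₀ ηu ηv θ₀ θz θw θv θu : ℝ) (hηu : ηu ≠ 0)
    (hW : ∀ ω, W ω = η₀ + ηu * U ω + ηv * V ω + εw ω)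
    (hεw : P[εw|m] =ᵐ[P] 0)
    (hX : ∀ ω, X ω = θ₀ + θz * Z ω + θw * W ω + θv * V ω + θu * U ω + νx ω)
    (hνx : P[νx|m] =ᵐ[P] 0) :
    P[X|m] =ᵐ[P] fun ω =>
      (θ₀ - θu * η₀ / ηu) + θz * Z ω + (θv - θu * ηv / ηu) * V ω
        + (θw + θu / ηu) * (P[W|m]) ω := by
  set A : Ω → ℝ := fun ω => (θ₀ - θu * η₀ / ηu) + θz * Z ω + (θv - θu * ηv / ηu) * V ω
  have hA : StronglyMeasurable[m] A :=
    (stronglyMeasurable_const.add (hZmeas.const_mul θz)).add (hVmeas.const_mul _)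
  have hAint : Integrable A P :=
    ((integrable_const _).add (hZint.const_mul θz)).add (hVint.const_mul _)
  have hXeq : X = A + (θw + θu / ηu) • W + (νx - (θu / ηu) • εw) := by
    funext ω
    have hU : U ω = (W ω - η₀ - ηv * V ω - εw ω) / ηu := by
      rw [hW ω]; field_simp; ring
    simp only [A, hX ω, hU, Pi.add_apply, Pi.sub_apply, Pi.smul_apply, smul_eq_mul]
    field_simp
    ring
  rw [hXeq]
  exact condExp_add_smul_add_ae_eq hm hA hAint hWint (hνxint.sub (hεwint.smul _))
    (condExp_sub_smul_ae_eq_zero hνxint hεwint hνx hεw _) _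

/-- Conditional expectation identity underlying identification of `θ_z`:
given the proxy model `W = η₀ + η_u U + η_v V + ε_w` with `E[ε_w | m] = 0` and
the reduced-form equation `X = θ₀ + θ_z Z + θ_w W + θ_v V + θ_u U + ν_x` with
`E[ν_x | m] = 0`, where `m` is generated by the observed `(Z, V)`, the
conditional expectation `E[X | m]` is an affine combination of `1, Z, V` and
`E[W | m]` with `Z`-coefficient exactly `θ_z`. -/
theorem stmt_14 {Ω : Type*} {mΩ : MeasurableSpace Ω} (P : Measure Ω)
    [IsProbabilityMeasure P] (m : MeasurableSpace Ω) (hm : m ≤ mΩ)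
    (Z V W U X εw νx : Ω → ℝ)
    (hZmeas : StronglyMeasurable[m] Z) (hVmeas : StronglyMeasurable[m] V)
    (hZint : Integrable Z P) (hVint : Integrable V P) (hWint : Integrable W P)
    (hUint : Integrable U P) (hXint : Integrable X P)
    (hεwint : Integrable εw P) (hνxint : Integrable νx P)
    (η₀ ηu ηv θ₀ θz θw θv θu : ℝ) (hηu : ηu ≠ 0)
    (hW : ∀ ω, W ω = η₀ + ηu * U ω + ηv * V ω + εw ω)
    (hεw : P[εw|m] =ᵐ[P] 0)
    (hX : ∀ ω, X ω = θ₀ + θz * Z ω + θw * W ω + θv * V ω + θu * U ω + νx ω)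
    (hνx : P[νx|m] =ᵐ[P] 0) :
    P[X|m] =ᵐ[P] fun ω =>
      (θ₀ - θu * η₀ / ηu) + θz * Z ω + (θv - θu * ηv / ηu) * V ω
        + (θw + θu / ηu) * (P[W|m]) ω :=
  stmt_14_general P m hm Z V W U X εw νx hZmeas hVmeas hZint hVint hWint hεwint hνxint η₀ ηu ηv θ₀
    θz θw θv θu hηu hW hεw hX hνx
end

section
/- Let (Ω, F, P) be a probability space and m ≤ F a sub-σ-algebra. Let Z, V, W, U, Y, ε_w, ν_y be real-valued integrable random variables with Z and V strongly m-measurable, and suppose: W = η₀ + η_u*U + η_v*V + ε_w with η_u ≠ 0 and E[ε_w | m] = 0 almost surely; Y = μ₀ + μ_z*Z + μ_w*W + μ_v*V + μ_u*U + ν_y with E[ν_y | m] = 0 almost surely; and all appearing random variables are integrable. Then, almost surely, E[Y | m] = (μ₀ - μ_u*η₀/η_u) + μ_z*Z + (μ_v - μ_u*η_v/η_u)*V + (μ_w + μ_u/η_u)*E[W | m]. -/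
open MeasureTheory

/-!
Solving the proxy equation for the unobserved `U` (possible since `η_u ≠ 0`) turns the reduced
form into `Y = c₀ + μ_z Z + c_v V + c_w W + (ν_y - (μ_u / η_u) ε_w)`. Conditioning on `m` keeps the
`m`-measurable part `c₀ + μ_z Z + c_v V`, replaces `W` by `E[W | m]` and kills the noise term.
-/

theorem reducedForm_eq_of_proxy {y z v w u εw νy η₀ ηu ηv μ₀ μz μw μv μu : ℝ} (hηu : ηu ≠ 0)
    (hw : w = η₀ + ηu * u + ηv * v + εw)
    (hy : y = μ₀ + μz * z + μw * w + μv * v + μu * u + νy) :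
    y = (μ₀ - μu * η₀ / ηu) + μz * z + (μv - μu * ηv / ηu) * v + (μw + μu / ηu) * w
      + (-(μu / ηu) * εw + νy) := by
  rw [hy, hw]
  field_simp
  ring

section CondExp

variable {Ω : Type*} {m mΩ : MeasurableSpace Ω} {μ : Measure Ω}

theorem condExp_smul_add_eq_zero {X Y : Ω → ℝ} (c : ℝ) (hXint : Integrable X μ)
    (hYint : Integrable Y μ) (hX : μ[X|m] =ᵐ[μ] 0) (hY : μ[Y|m] =ᵐ[μ] 0) :
    μ[c • X + Y|m] =ᵐ[μ] 0 := by
  filter_upwards [condExp_add (hXint.smul c) hYint m, condExp_smul c X m, hX, hY]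
    with ω hadd hsmul hXω hYω
  simp [hadd, hsmul, hXω, hYω]

theorem condExp_add_smul_add_of_condExp_eq_zero [IsFiniteMeasure μ] {F W N : Ω → ℝ} (c : ℝ)
    (hm : m ≤ mΩ)
    (hF : StronglyMeasurable[m] F) (hFint : Integrable F μ) (hWint : Integrable W μ)
    (hNint : Integrable N μ) (hN : μ[N|m] =ᵐ[μ] 0) :
    μ[F + c • W + N|m] =ᵐ[μ] F + c • μ[W|m] := by
  have hFW : μ[F + c • W|m] =ᵐ[μ] F + c • μ[W|m] := by
    exact (condExp_add hFint (hWint.smul c) m).trans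
      (.add (.of_eq (condExp_of_stronglyMeasurable hm hF hFint)) (condExp_smul c W m))
  filter_upwards [condExp_add (hFint.add (hWint.smul c)) hNint m, hFW, hN] with ω hadd hFWω hNω
  simp [hadd, hFWω, hNω]

end CondExp

theorem stmt_15_general {Ω : Type*} {mΩ : MeasurableSpace Ω} (P : Measure Ω)
    [IsProbabilityMeasure P] (m : MeasurableSpace Ω) (hm : m ≤ mΩ)
    (Z V W U Y εw νy : Ω → ℝ)
    (hZmeas : StronglyMeasurable[m] Z) (hVmeas : StronglyMeasurable[m] V)
    (hZint : Integrable Z P) (hVint : Integrable V P) (hWint : Integrable W P)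
    (hεwint : Integrable εw P) (hνyint : Integrable νy P)
    (η₀ ηu ηv μ₀ μz μw μv μu : ℝ) (hηu : ηu ≠ 0)
    (hW : ∀ ω, W ω = η₀ + ηu * U ω + ηv * V ω + εw ω)
    (hεw : P[εw|m] =ᵐ[P] 0)
    (hY : ∀ ω, Y ω = μ₀ + μz * Z ω + μw * W ω + μv * V ω + μu * U ω + νy ω)
    (hνy : P[νy|m] =ᵐ[P] 0) :
    P[Y|m] =ᵐ[P] fun ω =>
      (μ₀ - μu * η₀ / ηu) + μz * Z ω + (μv - μu * ηv / ηu) * V ω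
        + (μw + μu / ηu) * (P[W|m]) ω := by
  set F : Ω → ℝ := fun ω => (μ₀ - μu * η₀ / ηu) + μz * Z ω + (μv - μu * ηv / ηu) * V ω
  have hF : StronglyMeasurable[m] F :=
    (stronglyMeasurable_const.add (hZmeas.const_mul μz)).add (hVmeas.const_mul _)
  have hFint : Integrable F P :=
    ((integrable_const _).add (hZint.const_mul μz)).add (hVint.const_mul _)
  have hY' : Y = F + (μw + μu / ηu) • W + (-(μu / ηu) • εw + νy) :=
    funext fun ω => reducedForm_eq_of_proxy hηu (hW ω) (hY ω)
  rw [hY']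
  exact condExp_add_smul_add_of_condExp_eq_zero _ hm hF hFint hWint
    ((hεwint.smul _).add hνyint) (condExp_smul_add_eq_zero _ hεwint hνyint hεw hνy)

/-- Conditional expectation identity underlying identification of `μ_z`:
given the proxy model `W = η₀ + η_u U + η_v V + ε_w` with `E[ε_w | m] = 0` and
the reduced-form equation `Y = μ₀ + μ_z Z + μ_w W + μ_v V + μ_u U + ν_y` with
`E[ν_y | m] = 0`, where `m` is generated by the observed `(Z, V)`, the
conditional expectation `E[Y | m]` is an affine combination of `1, Z, V` and
`E[W | m]` with `Z`-coefficient exactly `μ_z`. -/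
theorem stmt_15 {Ω : Type*} {mΩ : MeasurableSpace Ω} (P : Measure Ω)
    [IsProbabilityMeasure P] (m : MeasurableSpace Ω) (hm : m ≤ mΩ)
    (Z V W U Y εw νy : Ω → ℝ)
    (hZmeas : StronglyMeasurable[m] Z) (hVmeas : StronglyMeasurable[m] V)
    (hZint : Integrable Z P) (hVint : Integrable V P) (hWint : Integrable W P)
    (hUint : Integrable U P) (hYint : Integrable Y P)
    (hεwint : Integrable εw P) (hνyint : Integrable νy P)
    (η₀ ηu ηv μ₀ μz μw μv μu : ℝ) (hηu : ηu ≠ 0)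
    (hW : ∀ ω, W ω = η₀ + ηu * U ω + ηv * V ω + εw ω)
    (hεw : P[εw|m] =ᵐ[P] 0)
    (hY : ∀ ω, Y ω = μ₀ + μz * Z ω + μw * W ω + μv * V ω + μu * U ω + νy ω)
    (hνy : P[νy|m] =ᵐ[P] 0) :
    P[Y|m] =ᵐ[P] fun ω =>
      (μ₀ - μu * η₀ / ηu) + μz * Z ω + (μv - μu * ηv / ηu) * V ω
        + (μw + μu / ηu) * (P[W|m]) ω :=
  stmt_15_general P m hm Z V W U Y εw νy hZmeas hVmeas hZint hVint hWint hεwint hνyint η₀ ηu ηv μ₀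
    μz μw μv μu hηu hW hεw hY hνy
end

section
/- Let (Ω, F, P) be a probability space and m ≤ F a sub-σ-algebra. Let Z, V, W, U, X, Y, ε_w, ν_x, ν_y be real-valued integrable random variables with Z and V strongly m-measurable. Suppose β_xy, β_yx, α_z are reals with β_xy*β_yx ≠ 1, ι = 1/(1 - β_xy*β_yx), and: W = η₀ + η_u*U + η_v*V + ε_w with η_u ≠ 0 and E[ε_w | m] = 0 a.s.; X = θ₀ + α_z*ι*Z + θ_w*W + θ_v*V + θ_u*U + ν_x with E[ν_x | m] = 0 a.s.; Y = μ₀ + α_z*β_xy*ι*Z + μ_w*W + μ_v*V + μ_u*U + ν_y with E[ν_y | m] = 0 a.s.; and all appearing random variables are integrable. Then there exist real constants d₀, d_v, d_w such that, almost surely, E[Y | m] - β_xy*E[X | m] = d₀ + d_v*V + d_w*E[W | m]; that is, the Z-coefficient of E[Y | m] - β_xy*E[X | m] vanishes. -/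
/-!
In `Y - β_{x→y} X` the `Z`-terms cancel identically, because `μ_z = β_{x→y} θ_z`. Eliminating
`U` through the proxy equation, `U = (W - η₀ - η_v V - ε_w) / η_u`, leaves an affine function
of `V` and `W` plus a combination of `ε_w, ν_x, ν_y`, whose conditional expectation vanishes.
Conditioning on `m` keeps the `m`-measurable `V` and replaces `W` by `E[W | m]`.
-/

open MeasureTheory

section CondExp

variable {Ω : Type*} {mΩ : MeasurableSpace Ω} {P : Measure Ω} {m : MeasurableSpace Ω}

theorem condExp_smul_add_ae_eq_zero {f g : Ω → ℝ} (hf : Integrable f P) (hg : Integrable g P)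
    (hf₀ : P[f|m] =ᵐ[P] 0) (hg₀ : P[g|m] =ᵐ[P] 0) (a : ℝ) :
    P[a • f + g|m] =ᵐ[P] 0 := by
  filter_upwards [condExp_add (hf.smul a) hg m, condExp_smul (μ := P) a f m, hf₀, hg₀]
    with ω hadd hsmul hf₀ω hg₀ω
  simp [hadd, hsmul, hf₀ω, hg₀ω]

theorem condExp_affine_add_noise [IsFiniteMeasure P] (hm : m ≤ mΩ) {V W N : Ω → ℝ}
    (hVmeas : StronglyMeasurable[m] V) (hV : Integrable V P) (hW : Integrable W P)
    (hN : Integrable N P) (hN₀ : P[N|m] =ᵐ[P] 0) (a b c : ℝ) :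
    P[fun ω => a + b * V ω + c * W ω + N ω|m] =ᵐ[P]
      fun ω => a + b * V ω + c * (P[W|m]) ω := by
  have hbV : P[b • V|m] = b • V :=
    condExp_of_stronglyMeasurable hm (hVmeas.const_smul b) (hV.smul b)
  have hsplit : (fun ω => a + b * V ω + c * W ω + N ω) =
      (fun _ => a) + b • V + c • W + N := rfl
  rw [hsplit]
  filter_upwards [condExp_add ((integrable_const a).add (hV.smul b) |>.add (hW.smul c)) hN m,
    condExp_add ((integrable_const a).add (hV.smul b)) (hW.smul c) m,
    condExp_add (integrable_const a) (hV.smul b) m, condExp_smul (μ := P) c W m, hN₀]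
    with ω h₁ h₂ h₃ hcW hN₀ω
  simp [h₁, h₂, h₃, hcW, hN₀ω, hbV, condExp_const hm]

end CondExp

theorem stmt_16_general {Ω : Type*} {mΩ : MeasurableSpace Ω} (P : Measure Ω)
    [IsProbabilityMeasure P] (m : MeasurableSpace Ω) (hm : m ≤ mΩ)
    (Z V W U X Y εw νx νy : Ω → ℝ)
    (hVmeas : StronglyMeasurable[m] V)
    (hVint : Integrable V P) (hWint : Integrable W P)
    (hXint : Integrable X P) (hYint : Integrable Y P)
    (hεwint : Integrable εw P) (hνxint : Integrable νx P)
    (hνyint : Integrable νy P)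
    (βxy αz : ℝ) (ι : ℝ)
    (η₀ ηu ηv θ₀ θw θv θu μ₀ μw μv μu : ℝ) (hηu : ηu ≠ 0)
    (hW : ∀ ω, W ω = η₀ + ηu * U ω + ηv * V ω + εw ω)
    (hεw : P[εw|m] =ᵐ[P] 0)
    (hX : ∀ ω, X ω = θ₀ + αz * ι * Z ω + θw * W ω + θv * V ω + θu * U ω + νx ω)
    (hνx : P[νx|m] =ᵐ[P] 0)
    (hY : ∀ ω, Y ω = μ₀ + αz * βxy * ι * Z ω + μw * W ω + μv * V ω
      + μu * U ω + νy ω)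
    (hνy : P[νy|m] =ᵐ[P] 0) :
    ∃ d₀ dv dw : ℝ,
      (fun ω => (P[Y|m]) ω - βxy * (P[X|m]) ω) =ᵐ[P]
        fun ω => d₀ + dv * V ω + dw * (P[W|m]) ω := by
  set k := (μu - βxy * θu) / ηu
  set noise := (-k) • εw + ((-βxy) • νx + νy)
  have hYX : Y - βxy • X = fun ω => (μ₀ - βxy * θ₀ - k * η₀) + (μv - βxy * θv - k * ηv) * V ω
      + (μw - βxy * θw + k) * W ω + noise ω := by
    funext ω
    simp only [noise, k, Pi.sub_apply, Pi.add_apply, Pi.smul_apply, smul_eq_mul, hX, hY, hW]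
    field_simp
    ring
  have hnoise : P[noise|m] =ᵐ[P] 0 :=
    condExp_smul_add_ae_eq_zero hεwint ((hνxint.smul _).add hνyint) hεw
      (condExp_smul_add_ae_eq_zero hνxint hνyint hνx hνy _) _
  refine ⟨μ₀ - βxy * θ₀ - k * η₀, μv - βxy * θv - k * ηv, μw - βxy * θw + k, ?_⟩
  calc (fun ω => (P[Y|m]) ω - βxy * (P[X|m]) ω) =ᵐ[P] P[Y - βxy • X|m] :=
        ((condExp_sub hYint (hXint.smul βxy) m).trans
          (Filter.EventuallyEq.rfl.sub (condExp_smul βxy X m))).symm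
    _ =ᵐ[P] _ := by
      rw [hYX]
      exact condExp_affine_add_noise hm hVmeas hVint hWint
        ((hεwint.smul _).add ((hνxint.smul _).add hνyint)) hnoise _ _ _

/-- Identification mechanism for `β_{x→y}` in Theorem 1: since the reduced-form
`Z`-coefficients satisfy `μ_z = β_{x→y} θ_z` with `θ_z = α_z ι` and
`μ_z = α_z β_{x→y} ι`, subtracting `β_{x→y} E[X | m]` from `E[Y | m]`
eliminates the `Z` term: the difference is an affine combination of `1, V` and
`E[W | m]` only. -/
theorem stmt_16 {Ω : Type*} {mΩ : MeasurableSpace Ω} (P : Measure Ω)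
    [IsProbabilityMeasure P] (m : MeasurableSpace Ω) (hm : m ≤ mΩ)
    (Z V W U X Y εw νx νy : Ω → ℝ)
    (hZmeas : StronglyMeasurable[m] Z) (hVmeas : StronglyMeasurable[m] V)
    (hZint : Integrable Z P) (hVint : Integrable V P) (hWint : Integrable W P)
    (hUint : Integrable U P) (hXint : Integrable X P) (hYint : Integrable Y P)
    (hεwint : Integrable εw P) (hνxint : Integrable νx P)
    (hνyint : Integrable νy P)
    (βxy βyx αz : ℝ) (hne : βxy * βyx ≠ 1) (ι : ℝ)
    (hι : ι = 1 / (1 - βxy * βyx))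
    (η₀ ηu ηv θ₀ θw θv θu μ₀ μw μv μu : ℝ) (hηu : ηu ≠ 0)
    (hW : ∀ ω, W ω = η₀ + ηu * U ω + ηv * V ω + εw ω)
    (hεw : P[εw|m] =ᵐ[P] 0)
    (hX : ∀ ω, X ω = θ₀ + αz * ι * Z ω + θw * W ω + θv * V ω + θu * U ω + νx ω)
    (hνx : P[νx|m] =ᵐ[P] 0)
    (hY : ∀ ω, Y ω = μ₀ + αz * βxy * ι * Z ω + μw * W ω + μv * V ω
      + μu * U ω + νy ω)
    (hνy : P[νy|m] =ᵐ[P] 0) :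
    ∃ d₀ dv dw : ℝ,
      (fun ω => (P[Y|m]) ω - βxy * (P[X|m]) ω) =ᵐ[P]
        fun ω => d₀ + dv * V ω + dw * (P[W|m]) ω :=
  stmt_16_general P m hm Z V W U X Y εw νx νy hVmeas hVint hWint hXint hYint hεwint hνxint hνyint
    βxy αz ι η₀ ηu ηv θ₀ θw θv θu μ₀ μw μv μu hηu hW hεw hX hνx hY hνy
end

section
/- Let (Ω, F, P) be a probability space and m ≤ F a sub-σ-algebra. Let Z, V, W, U, X, Y, ε_z, ν_x, ν_y be real-valued integrable random variables with W and V strongly m-measurable. Suppose β_xy, β_yx, γ_w are reals with β_xy*β_yx ≠ 1, ι = 1/(1 - β_xy*β_yx), and: Z = δ₀ + δ_u*U + δ_v*V + ε_z with δ_u ≠ 0 and E[ε_z | m] = 0 a.s.; X = θ₀ + θ_z*Z + γ_w*β_yx*ι*W + θ_v*V + θ_u*U + ν_x with E[ν_x | m] = 0 a.s.; Y = μ₀ + μ_z*Z + γ_w*ι*W + μ_v*V + μ_u*U + ν_y with E[ν_y | m] = 0 a.s.; and all appearing random variables are integrable. Then there exist real constants d₀, d_v, d_z such that, almost surely, E[X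 | m] - β_yx*E[Y | m] = d₀ + d_v*V + d_z*E[Z | m]; that is, the W-coefficient of E[X | m] - β_yx*E[Y | m] vanishes. -/
/-!
Solving the proxy equation for `U` turns `X` into an affine combination of `Z`, the
`m`-measurable regressors `W, V` and the noise `ε_z, ν_x`, whose conditional expectations
vanish; hence `E[X | m]` is the same combination of `E[Z | m]`, `W` and `V`, and likewise for
`Y`. The `W`-coefficients `γ_w β_{y→x} ι` of `X` and `γ_w ι` of `Y` are proportional with
ratio `β_{y→x}`, so `W` cancels from `E[X | m] - β_{y→x} E[Y | m]`.
-/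

open MeasureTheory

section

variable {Ω : Type*} {mΩ : MeasurableSpace Ω} {P : Measure Ω} {m : MeasurableSpace Ω}

theorem condExp_smul_add_add_of_condExp_eq_zero (hm : m ≤ mΩ) [SigmaFinite (P.trim hm)]
    (a : ℝ) {Z G N : Ω → ℝ} (hZ : Integrable Z P) (hGm : StronglyMeasurable[m] G)
    (hG : Integrable G P) (hN : Integrable N P) (hN0 : P[N|m] =ᵐ[P] 0) :
    P[a • Z + G + N|m] =ᵐ[P] a • P[Z|m] + G := by
  have hZG : P[a • Z + G|m] =ᵐ[P] a • P[Z|m] + G := by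
    filter_upwards [condExp_add (hZ.smul a) hG m, condExp_smul (μ := P) a Z m] with ω h hZω
    rw [h, Pi.add_apply, hZω, condExp_of_stronglyMeasurable hm hGm hG]
    rfl
  filter_upwards [condExp_add ((hZ.smul a).add hG) hN m, hZG, hN0] with ω h hZGω hNω
  rw [h, Pi.add_apply, hZGω, hNω, Pi.zero_apply, add_zero]

theorem condExp_eq_of_proxy [IsFiniteMeasure P] (hm : m ≤ mΩ) {Z V W U X εz νx : Ω → ℝ}
    (hWm : StronglyMeasurable[m] W) (hVm : StronglyMeasurable[m] V)
    (hZint : Integrable Z P) (hVint : Integrable V P) (hWint : Integrable W P)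
    (hεzint : Integrable εz P) (hνxint : Integrable νx P)
    {δ₀ δu δv θ₀ θz θw θv θu : ℝ} (hδu : δu ≠ 0)
    (hZ : ∀ ω, Z ω = δ₀ + δu * U ω + δv * V ω + εz ω) (hεz : P[εz|m] =ᵐ[P] 0)
    (hX : ∀ ω, X ω = θ₀ + θz * Z ω + θw * W ω + θv * V ω + θu * U ω + νx ω)
    (hνx : P[νx|m] =ᵐ[P] 0) :
    P[X|m] =ᵐ[P] fun ω => (θ₀ - θu * δ₀ / δu) + (θz + θu / δu) * P[Z|m] ω + θw * W ω
      + (θv - θu * δv / δu) * V ω := by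
  set G : Ω → ℝ := fun ω => (θ₀ - θu * δ₀ / δu) + θw * W ω + (θv - θu * δv / δu) * V ω
  set N : Ω → ℝ := (-(θu / δu)) • εz + νx
  have hXeq : X = (θz + θu / δu) • Z + G + N := by
    funext ω
    have hU : U ω = (Z ω - δ₀ - δv * V ω - εz ω) / δu := by
      rw [eq_div_iff hδu, hZ ω]
      ring
    simp only [hX ω, hU, G, N, Pi.add_apply, Pi.smul_apply, smul_eq_mul]
    field_simp
    ring
  have hGm : StronglyMeasurable[m] G :=
    (stronglyMeasurable_const.add (hWm.const_mul θw)).add (hVm.const_mul _)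
  have hGint : Integrable G P :=
    ((integrable_const _).add (hWint.const_mul θw)).add (hVint.const_mul _)
  have hN0 : P[N|m] =ᵐ[P] 0 := by
    filter_upwards [condExp_add (hεzint.smul (-(θu / δu))) hνxint m,
      condExp_smul (μ := P) (-(θu / δu)) εz m, hεz, hνx] with ω h hsmul hεω hνω
    rw [Pi.zero_apply, h, Pi.add_apply, hsmul, Pi.smul_apply, hεω, hνω]
    simp
  rw [hXeq]
  filter_upwards [condExp_smul_add_add_of_condExp_eq_zero hm _ hZint hGm hGint
    ((hεzint.smul _).add hνxint) hN0] with ω h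
  rw [h]
  simp only [G, Pi.add_apply, Pi.smul_apply, smul_eq_mul]
  ring

end

theorem stmt_17_general {Ω : Type*} {mΩ : MeasurableSpace Ω} (P : Measure Ω)
    [IsProbabilityMeasure P] (m : MeasurableSpace Ω) (hm : m ≤ mΩ)
    (Z V W U X Y εz νx νy : Ω → ℝ)
    (hWmeas : StronglyMeasurable[m] W) (hVmeas : StronglyMeasurable[m] V)
    (hZint : Integrable Z P) (hVint : Integrable V P) (hWint : Integrable W P)
    (hεzint : Integrable εz P) (hνxint : Integrable νx P)
    (hνyint : Integrable νy P)
    (βyx γw : ℝ) (ι : ℝ)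
    (δ₀ δu δv θ₀ θz θv θu μ₀ μz μv μu : ℝ) (hδu : δu ≠ 0)
    (hZ : ∀ ω, Z ω = δ₀ + δu * U ω + δv * V ω + εz ω)
    (hεz : P[εz|m] =ᵐ[P] 0)
    (hX : ∀ ω, X ω = θ₀ + θz * Z ω + γw * βyx * ι * W ω + θv * V ω
      + θu * U ω + νx ω)
    (hνx : P[νx|m] =ᵐ[P] 0)
    (hY : ∀ ω, Y ω = μ₀ + μz * Z ω + γw * ι * W ω + μv * V ω + μu * U ω + νy ω)
    (hνy : P[νy|m] =ᵐ[P] 0) :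
    ∃ d₀ dv dz : ℝ,
      (fun ω => (P[X|m]) ω - βyx * (P[Y|m]) ω) =ᵐ[P]
        fun ω => d₀ + dv * V ω + dz * (P[Z|m]) ω := by
  have hXc := condExp_eq_of_proxy hm hWmeas hVmeas hZint hVint hWint hεzint hνxint hδu hZ hεz
    hX hνx
  have hYc := condExp_eq_of_proxy hm hWmeas hVmeas hZint hVint hWint hεzint hνyint hδu hZ hεz
    hY hνy
  refine ⟨(θ₀ - θu * δ₀ / δu) - βyx * (μ₀ - μu * δ₀ / δu),
    (θv - θu * δv / δu) - βyx * (μv - μu * δv / δu),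
    (θz + θu / δu) - βyx * (μz + μu / δu), ?_⟩
  filter_upwards [hXc, hYc] with ω hXω hYω
  rw [hXω, hYω]
  ring

/-- Identification mechanism for `β_{y→x}` in Theorem 1: since the reduced-form
`W`-coefficients satisfy `θ_w = β_{y→x} μ_w` with `θ_w = γ_w β_{y→x} ι` and
`μ_w = γ_w ι`, subtracting `β_{y→x} E[Y | m]` from `E[X | m]` eliminates the
`W` term: the difference is an affine combination of `1, V` and `E[Z | m]`
only. -/
theorem stmt_17 {Ω : Type*} {mΩ : MeasurableSpace Ω} (P : Measure Ω)
    [IsProbabilityMeasure P] (m : MeasurableSpace Ω) (hm : m ≤ mΩ)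
    (Z V W U X Y εz νx νy : Ω → ℝ)
    (hWmeas : StronglyMeasurable[m] W) (hVmeas : StronglyMeasurable[m] V)
    (hZint : Integrable Z P) (hVint : Integrable V P) (hWint : Integrable W P)
    (hUint : Integrable U P) (hXint : Integrable X P) (hYint : Integrable Y P)
    (hεzint : Integrable εz P) (hνxint : Integrable νx P)
    (hνyint : Integrable νy P)
    (βxy βyx γw : ℝ) (hne : βxy * βyx ≠ 1) (ι : ℝ)
    (hι : ι = 1 / (1 - βxy * βyx))
    (δ₀ δu δv θ₀ θz θv θu μ₀ μz μv μu : ℝ) (hδu : δu ≠ 0)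
    (hZ : ∀ ω, Z ω = δ₀ + δu * U ω + δv * V ω + εz ω)
    (hεz : P[εz|m] =ᵐ[P] 0)
    (hX : ∀ ω, X ω = θ₀ + θz * Z ω + γw * βyx * ι * W ω + θv * V ω
      + θu * U ω + νx ω)
    (hνx : P[νx|m] =ᵐ[P] 0)
    (hY : ∀ ω, Y ω = μ₀ + μz * Z ω + γw * ι * W ω + μv * V ω + μu * U ω + νy ω)
    (hνy : P[νy|m] =ᵐ[P] 0) :
    ∃ d₀ dv dz : ℝ,
      (fun ω => (P[X|m]) ω - βyx * (P[Y|m]) ω) =ᵐ[P]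
        fun ω => d₀ + dv * V ω + dz * (P[Z|m]) ω :=
  stmt_17_general P m hm Z V W U X Y εz νx νy hWmeas hVmeas hZint hVint hWint hεzint hνxint hνyint
    βyx γw ι δ₀ δu δv θ₀ θz θv θu μ₀ μz μv μu hδu hZ hεz hX hνx hY hνy
end
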